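/- Let n ≥ 3 and let k₁, k₂, k₃ ≥ 1 be integers with k₁ + k₂ + k₃ = n. Then the Zelevinsky embeddings are associative: for all a ∈ Ĥ_{k₁}, b ∈ Ĥ_{k₂} and c ∈ Ĥ_{k₃}, ψ_{k₁+k₂,k₃}( ψ_{k₁,k₂}(a ⊗ b) ⊗ c ) = ψ_{k₁,k₂+k₃}( a ⊗ ψ_{k₂,k₃}(b ⊗ c) ) in Ĥ_n; equivalently, ψ_{k₁+k₂,k₃} ∘ (ψ_{k₁,k₂} ⊗ id) = ψ_{k₁,k₂+k₃} ∘ (id ⊗ ψ_{k₂,k₃}) as R-algebra homomorphisms Ĥ_{k₁} ⊗_R Ĥ_{k₂} ⊗_R Ĥ_{k₃} → Ĥ_n. -/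

import Mathlib

/-!
`Ĥ_k` is generated as an `R`-algebra by `T_1, …, T_{k-1}` and `ρ^{±1}`, because
`T_0 = ρ T_{k-1} ρ⁻¹`; so the images of `T_0` never have to be computed. With `n = k₁ + k₂ + k₃`,
associativity reduces to three identities of algebra maps: `ψ_L ∘ ψ_L = ψ_L` out of `Ĥ_{k₁}`,
`ψ_L ∘ ψ_R = ψ_R ∘ ψ_L` out of `Ĥ_{k₂}` and `ψ_R ∘ ψ_R = ψ_R` out of `Ĥ_{k₃}`. On the `T_i` these
are index shifts, and on `ρ` they amount to concatenating the descending products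
`T_{n-1} ⋯ T_{k₁+k₂} · T_{k₁+k₂-1} ⋯ T_{k₁}` and `T_{k₁+k₂}⁻¹ ⋯ T_{k₁+1}⁻¹ · T_{k₁}⁻¹ ⋯ T_1⁻¹`.
-/

noncomputable section

namespace ParabolicInduction

/-- The ground ring `R = ℤ[q, q⁻¹]`. -/
abbrev R : Type := LaurentPolynomial ℤ

/-- The element `q ∈ R`. -/
def qR : R := LaurentPolynomial.T 1

/-- The element `q⁻¹ ∈ R`. -/
def qRinv : R := LaurentPolynomial.T (-1)

/-- Generators of the extended affine Hecke algebra `Ĥ_n`:  the `T_i` (present only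
when `2 ≤ n`) and `ρ`, `ρ⁻¹`.  For `n = 1` only `ρ^{±1}` remain, so that `Ĥ_1` is the
Laurent polynomial algebra `R[ρ, ρ⁻¹]`. -/
inductive HGen (n : ℕ) : Type
  | T (i : Fin n) (h : 2 ≤ n) : HGen n
  | rho : HGen n
  | rhoInv : HGen n

/-- Cyclic successor `i ↦ i + 1 (mod n)` on `Fin n`. -/
def cyc {n : ℕ} (i : Fin n) : Fin n := ⟨((i : ℕ) + 1) % n, Nat.mod_lt _ i.pos⟩

/-- The defining relations of the extended affine Hecke algebra `Ĥ_n`. -/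
inductive HRel (n : ℕ) : FreeAlgebra R (HGen n) → FreeAlgebra R (HGen n) → Prop
  | quad (i : Fin n) (h : 2 ≤ n) :
      HRel n ((FreeAlgebra.ι R (HGen.T i h) + algebraMap R _ qR) *
        (FreeAlgebra.ι R (HGen.T i h) - algebraMap R _ qRinv)) 0
  | comm (i j : Fin n) (h : 2 < n)
      (h1 : ((i : ℕ) : ZMod n) - ((j : ℕ) : ZMod n) ≠ 1)
      (h2 : ((i : ℕ) : ZMod n) - ((j : ℕ) : ZMod n) ≠ -1) :
      HRel n (FreeAlgebra.ι R (HGen.T i h.le) * FreeAlgebra.ι R (HGen.T j h.le))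
        (FreeAlgebra.ι R (HGen.T j h.le) * FreeAlgebra.ι R (HGen.T i h.le))
  | braid (i : Fin n) (h : 2 < n) :
      HRel n
        (FreeAlgebra.ι R (HGen.T i h.le) * FreeAlgebra.ι R (HGen.T (cyc i) h.le) *
          FreeAlgebra.ι R (HGen.T i h.le))
        (FreeAlgebra.ι R (HGen.T (cyc i) h.le) * FreeAlgebra.ι R (HGen.T i h.le) *
          FreeAlgebra.ι R (HGen.T (cyc i) h.le))
  | rho_rhoInv : HRel n (FreeAlgebra.ι R HGen.rho * FreeAlgebra.ι R HGen.rhoInv) 1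
  | rhoInv_rho : HRel n (FreeAlgebra.ι R HGen.rhoInv * FreeAlgebra.ι R HGen.rho) 1
  | conj (i : Fin n) (h : 2 ≤ n) :
      HRel n
        (FreeAlgebra.ι R HGen.rho * FreeAlgebra.ι R (HGen.T i h) * FreeAlgebra.ι R HGen.rhoInv)
        (FreeAlgebra.ι R (HGen.T (cyc i) h))

/-- The extended affine Hecke algebra `Ĥ_n`, presented by generators and relations. -/
abbrev Hecke (n : ℕ) : Type := RingQuot (HRel n)

/-- The generator `T_i` of `Ĥ_n` (indices read modulo `n`). -/
def HT {n : ℕ} (h : 2 ≤ n) (i : ℕ) : Hecke n :=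
  RingQuot.mkAlgHom R (HRel n)
    (FreeAlgebra.ι R (HGen.T ⟨i % n, Nat.mod_lt _ (by omega)⟩ h))

/-- The generator `ρ` of `Ĥ_n`. -/
def Hrho (n : ℕ) : Hecke n := RingQuot.mkAlgHom R (HRel n) (FreeAlgebra.ι R HGen.rho)

/-- The generator `ρ⁻¹` of `Ĥ_n`. -/
def HrhoInv (n : ℕ) : Hecke n := RingQuot.mkAlgHom R (HRel n) (FreeAlgebra.ι R HGen.rhoInv)

/-- The element `T_i⁻¹ = T_i + q - q⁻¹` of `Ĥ_n`. -/
def HTinv {n : ℕ} (h : 2 ≤ n) (i : ℕ) : Hecke n :=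
  HT h i + algebraMap R (Hecke n) (qR - qRinv)

/-- The descending ordered product `T_a T_{a-1} ⋯ T_b` (empty, i.e. `1`, if `b > a`). -/
def Tdesc {n : ℕ} (h : 2 ≤ n) (a b : ℕ) : Hecke n :=
  (((List.range' b (a + 1 - b)).reverse).map (HT h)).prod

/-- The ascending ordered product `T_a T_{a+1} ⋯ T_b` (empty, i.e. `1`, if `b < a`). -/
def Tasc {n : ℕ} (h : 2 ≤ n) (a b : ℕ) : Hecke n :=
  ((List.range' a (b + 1 - a)).map (HT h)).prod

/-- The descending ordered product `T_a⁻¹ T_{a-1}⁻¹ ⋯ T_b⁻¹` (empty if `b > a`). -/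
def TinvDesc {n : ℕ} (h : 2 ≤ n) (a b : ℕ) : Hecke n :=
  (((List.range' b (a + 1 - b)).reverse).map (HTinv h)).prod

/-- The ascending ordered product `T_a⁻¹ T_{a+1}⁻¹ ⋯ T_b⁻¹` (empty if `b < a`). -/
def TinvAsc {n : ℕ} (h : 2 ≤ n) (a b : ℕ) : Hecke n :=
  ((List.range' a (b + 1 - a)).map (HTinv h)).prod

/-- The defining conditions for the left parabolic embedding `ψ_L : Ĥ_k → Ĥ_n`:
`ψ_L(T_i) = T_i` for `1 ≤ i ≤ k - 1`,
`ψ_L(T_0) = T_k⁻¹ ⋯ T_{n-1}⁻¹ T_0 T_{n-1} ⋯ T_k` (when `2 ≤ k`), and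
`ψ_L(ρ) = ρ T_{n-1} ⋯ T_k`. -/
def IsPsiL (n k : ℕ) (hn : 2 ≤ n) (f : Hecke k →ₐ[R] Hecke n) : Prop :=
  (∀ (hk : 2 ≤ k) (i : ℕ), 1 ≤ i → i ≤ k - 1 → f (HT hk i) = HT hn i) ∧
  (∀ hk : 2 ≤ k, f (HT hk 0) = TinvAsc hn k (n - 1) * HT hn 0 * Tdesc hn (n - 1) k) ∧
  f (Hrho k) = Hrho n * Tdesc hn (n - 1) k

/-- The defining conditions for the right parabolic embedding `ψ_R : Ĥ_m → Ĥ_n`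
(where `m = n - k`):
`ψ_R(T_j) = T_{k+j}` for `1 ≤ j ≤ m - 1`,
`ψ_R(T_0) = T_0 T_1 ⋯ T_{k-1} T_k T_{k-1}⁻¹ ⋯ T_1⁻¹ T_0⁻¹` (when `2 ≤ m`), and
`ψ_R(ρ) = T_k⁻¹ T_{k-1}⁻¹ ⋯ T_1⁻¹ ρ`. -/
def IsPsiR (n k m : ℕ) (hn : 2 ≤ n) (g : Hecke m →ₐ[R] Hecke n) : Prop :=
  (∀ (hm : 2 ≤ m) (j : ℕ), 1 ≤ j → j ≤ m - 1 → g (HT hm j) = HT hn (k + j)) ∧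
  (∀ hm : 2 ≤ m, g (HT hm 0) = Tasc hn 0 (k - 1) * HT hn k * TinvDesc hn (k - 1) 0) ∧
  g (Hrho m) = TinvDesc hn k 1 * Hrho n

section DescendingProduct

variable {M : Type*} [Monoid M]

def descProd (g : ℕ → M) (a b : ℕ) : M :=
  (((List.range' b (a + 1 - b)).reverse).map g).prod

theorem descProd_split (g : ℕ → M) {a b c : ℕ} (hbc : b ≤ c) (hc : 1 ≤ c) (hca : c ≤ a + 1) :
    descProd g a b = descProd g a c * descProd g (c - 1) b := by
  have hrange :
      List.range' b (c - b) ++ List.range' c (a + 1 - c) = List.range' b (a + 1 - b) := by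
    have h := List.range'_append_1 (s := b) (m := c - b) (n := a + 1 - c)
    rwa [Nat.add_sub_cancel' hbc, show c - b + (a + 1 - c) = a + 1 - b by omega] at h
  rw [descProd, descProd, descProd, show c - 1 + 1 - b = c - b by omega, ← hrange,
    List.reverse_append, List.map_append, List.prod_append]

theorem map_descProd {N F : Type*} [Monoid N] [FunLike F M N] [MonoidHomClass F M N] (f : F)
    {g : ℕ → M} {g' : ℕ → N} (s : ℕ) {a b : ℕ}
    (hf : ∀ j, b ≤ j → j ≤ a → f (g j) = g' (s + j)) :
    f (descProd g a b) = descProd g' (s + a) (s + b) := by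
  rw [descProd, descProd, map_list_prod, List.map_map,
    show s + a + 1 - (s + b) = a + 1 - b by omega, ← List.map_add_range', ← List.map_reverse,
    List.map_map]
  congr 1
  refine List.map_congr_left fun j hj => hf j ?_ ?_ <;>
    simp only [List.mem_reverse, List.mem_range'_1] at hj <;> omega

end DescendingProduct

variable {n k : ℕ}

theorem Tdesc_split (h : 2 ≤ n) {a b c : ℕ} (hbc : b ≤ c) (hc : 1 ≤ c) (hca : c ≤ a + 1) :
    Tdesc h a b = Tdesc h a c * Tdesc h (c - 1) b :=
  descProd_split _ hbc hc hca

theorem TinvDesc_split (h : 2 ≤ n) {a b c : ℕ} (hbc : b ≤ c) (hc : 1 ≤ c) (hca : c ≤ a + 1) :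
    TinvDesc h a b = TinvDesc h a c * TinvDesc h (c - 1) b :=
  descProd_split _ hbc hc hca

theorem map_Tdesc {hk : 2 ≤ k} {hn : 2 ≤ n} (f : Hecke k →ₐ[R] Hecke n) (s : ℕ) {a b : ℕ}
    (hf : ∀ j, b ≤ j → j ≤ a → f (HT hk j) = HT hn (s + j)) :
    f (Tdesc hk a b) = Tdesc hn (s + a) (s + b) :=
  map_descProd f s hf

theorem map_TinvDesc {hk : 2 ≤ k} {hn : 2 ≤ n} (f : Hecke k →ₐ[R] Hecke n) (s : ℕ) {a b : ℕ}
    (hf : ∀ j, b ≤ j → j ≤ a → f (HT hk j) = HT hn (s + j)) :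
    f (TinvDesc hk a b) = TinvDesc hn (s + a) (s + b) :=
  map_descProd f s fun j hbj hja => by rw [HTinv, map_add, AlgHom.commutes, hf j hbj hja, HTinv]

theorem HT_mod (h : 2 ≤ n) (i : ℕ) : HT h (i % n) = HT h i := by
  simp only [HT, Nat.mod_mod]

theorem Hrho_mul_HT_mul_HrhoInv (h : 2 ≤ n) (i : ℕ) :
    Hrho n * HT h i * HrhoInv n = HT h (i + 1) := by
  have hconj := RingQuot.mkAlgHom_rel R (HRel.conj ⟨i % n, Nat.mod_lt _ (by omega)⟩ h)
  rw [map_mul, map_mul] at hconj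
  rw [Hrho, HT, HrhoInv, hconj, HT]
  simp only [cyc, Nat.mod_add_mod]

theorem HrhoInv_mul_Hrho : HrhoInv n * Hrho n = 1 := by
  have h := RingQuot.mkAlgHom_rel R (HRel.rhoInv_rho (n := n))
  rwa [map_mul, map_one] at h

theorem Hrho_mul_HrhoInv : Hrho n * HrhoInv n = 1 := by
  have h := RingQuot.mkAlgHom_rel R (HRel.rho_rhoInv (n := n))
  rwa [map_mul, map_one] at h

theorem HT_zero_eq_conj (h : 2 ≤ n) : HT h 0 = Hrho n * HT h (n - 1) * HrhoInv n := by
  rw [Hrho_mul_HT_mul_HrhoInv, Nat.sub_add_cancel (by omega), ← HT_mod h n, Nat.mod_self]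

theorem Hecke.algHom_ext {A : Type*} [Semiring A] [Algebra R A] {f g : Hecke k →ₐ[R] A}
    (hT : ∀ (hk : 2 ≤ k) (i : ℕ), 1 ≤ i → i < k → f (HT hk i) = g (HT hk i))
    (hρ : f (Hrho k) = g (Hrho k)) : f = g := by
  have hρinv : f (HrhoInv k) = g (HrhoInv k) :=
    left_inv_eq_right_inv (a := f (Hrho k))
      (by rw [← map_mul, HrhoInv_mul_Hrho, map_one])
      (by rw [hρ, ← map_mul, Hrho_mul_HrhoInv, map_one])
  have hT_lt (hk : 2 ≤ k) (i : ℕ) (hi : i < k) : f (HT hk i) = g (HT hk i) := by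
    rcases Nat.eq_zero_or_pos i with rfl | hi0
    · simp only [HT_zero_eq_conj hk, map_mul, hρ, hρinv, hT hk (k - 1) (by omega) (by omega)]
    · exact hT hk i hi0 hi
  apply RingQuot.ringQuot_ext'
  apply FreeAlgebra.hom_ext
  funext x
  cases x with
  | T i hk => simpa [HT, Nat.mod_eq_of_lt i.isLt] using hT_lt hk i i.isLt
  | rho => exact hρ
  | rhoInv => exact hρinv

variable {k₁ k₂ k₃ : ℕ}

theorem psiL_comp_psiL (h1 : 1 ≤ k₁) {hK : 2 ≤ k₁ + k₂} {hn : 2 ≤ k₁ + k₂ + k₃}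
    {fL : Hecke k₁ →ₐ[R] Hecke (k₁ + k₂)} {ΦL : Hecke (k₁ + k₂) →ₐ[R] Hecke (k₁ + k₂ + k₃)}
    {ΓL : Hecke k₁ →ₐ[R] Hecke (k₁ + k₂ + k₃)} (hfL : IsPsiL (k₁ + k₂) k₁ hK fL)
    (hΦL : IsPsiL (k₁ + k₂ + k₃) (k₁ + k₂) hn ΦL) (hΓL : IsPsiL (k₁ + k₂ + k₃) k₁ hn ΓL) :
    ΦL.comp fL = ΓL := by
  obtain ⟨hfT, -, hfρ⟩ := hfL
  obtain ⟨hΦT, -, hΦρ⟩ := hΦL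
  obtain ⟨hΓT, -, hΓρ⟩ := hΓL
  refine Hecke.algHom_ext (fun hk i hi1 hik => ?_) ?_
  · rw [AlgHom.comp_apply, hfT hk i hi1 (by omega), hΦT hK i hi1 (by omega),
      hΓT hk i hi1 (by omega)]
  · rw [AlgHom.comp_apply, hfρ, map_mul, hΦρ,
      map_Tdesc ΦL 0 fun j hbj hja => by rw [zero_add, hΦT hK j (by omega) (by omega)],
      zero_add, zero_add, hΓρ, mul_assoc,
      ← Tdesc_split hn (c := k₁ + k₂) (by omega) (by omega) (by omega)]

theorem psiR_comp_psiR (h3 : 1 ≤ k₃) {hM : 2 ≤ k₂ + k₃} {hn : 2 ≤ k₁ + k₂ + k₃}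
    {gR : Hecke k₃ →ₐ[R] Hecke (k₂ + k₃)} {ΓR : Hecke (k₂ + k₃) →ₐ[R] Hecke (k₁ + k₂ + k₃)}
    {ΦR : Hecke k₃ →ₐ[R] Hecke (k₁ + k₂ + k₃)} (hgR : IsPsiR (k₂ + k₃) k₂ k₃ hM gR)
    (hΓR : IsPsiR (k₁ + k₂ + k₃) k₁ (k₂ + k₃) hn ΓR)
    (hΦR : IsPsiR (k₁ + k₂ + k₃) (k₁ + k₂) k₃ hn ΦR) :
    ΓR.comp gR = ΦR := by
  obtain ⟨hgT, -, hgρ⟩ := hgR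
  obtain ⟨hΓT, -, hΓρ⟩ := hΓR
  obtain ⟨hΦT, -, hΦρ⟩ := hΦR
  refine Hecke.algHom_ext (fun hk j hj1 hjk => ?_) ?_
  · rw [AlgHom.comp_apply, hgT hk j hj1 (by omega), hΓT hM (k₂ + j) (by omega) (by omega),
      hΦT hk j hj1 (by omega), add_assoc k₁ k₂ j]
  · rw [AlgHom.comp_apply, hgρ, map_mul,
      map_TinvDesc ΓR k₁ fun j hbj hja => hΓT hM j hbj (by omega),
      hΓρ, hΦρ, TinvDesc_split hn (a := k₁ + k₂) (b := 1) (c := k₁ + 1) (by omega) (by omega)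
        (by omega), Nat.add_sub_cancel, mul_assoc]

theorem psiL_comp_psiR_eq_psiR_comp_psiL (h2 : 1 ≤ k₂) {hK : 2 ≤ k₁ + k₂} {hM : 2 ≤ k₂ + k₃}
    {hn : 2 ≤ k₁ + k₂ + k₃} {fR : Hecke k₂ →ₐ[R] Hecke (k₁ + k₂)}
    {gL : Hecke k₂ →ₐ[R] Hecke (k₂ + k₃)} {ΦL : Hecke (k₁ + k₂) →ₐ[R] Hecke (k₁ + k₂ + k₃)}
    {ΓR : Hecke (k₂ + k₃) →ₐ[R] Hecke (k₁ + k₂ + k₃)} (hfR : IsPsiR (k₁ + k₂) k₁ k₂ hK fR)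
    (hgL : IsPsiL (k₂ + k₃) k₂ hM gL) (hΦL : IsPsiL (k₁ + k₂ + k₃) (k₁ + k₂) hn ΦL)
    (hΓR : IsPsiR (k₁ + k₂ + k₃) k₁ (k₂ + k₃) hn ΓR) :
    ΦL.comp fR = ΓR.comp gL := by
  obtain ⟨hfT, -, hfρ⟩ := hfR
  obtain ⟨hgT, -, hgρ⟩ := hgL
  obtain ⟨hΦT, -, hΦρ⟩ := hΦL
  obtain ⟨hΓT, -, hΓρ⟩ := hΓR
  refine Hecke.algHom_ext (fun hk j hj1 hjk => ?_) ?_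
  · rw [AlgHom.comp_apply, AlgHom.comp_apply, hfT hk j hj1 (by omega),
      hΦT hK (k₁ + j) (by omega) (by omega), hgT hk j hj1 (by omega), hΓT hM j hj1 (by omega)]
  · rw [AlgHom.comp_apply, AlgHom.comp_apply, hfρ, map_mul,
      map_TinvDesc ΦL 0 fun j hbj hja => by rw [zero_add, hΦT hK j (by omega) (by omega)],
      zero_add, zero_add, hΦρ, hgρ, map_mul, hΓρ,
      map_Tdesc ΓR k₁ fun j hbj hja => hΓT hM j (by omega) (by omega),
      show k₁ + (k₂ + k₃ - 1) = k₁ + k₂ + k₃ - 1 by omega, mul_assoc]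

/-- **Statement 11.**  Associativity of the Zelevinsky embeddings:
`ψ_{k₁+k₂,k₃} ∘ (ψ_{k₁,k₂} ⊗ id) = ψ_{k₁,k₂+k₃} ∘ (id ⊗ ψ_{k₂,k₃})`, stated at the level
of elements, where each `ψ_{k,m}` is determined by its pair of parabolic embeddings
`ψ_L`, `ψ_R` via `a ⊗ b ↦ ψ_L(a)·ψ_R(b)`. -/
theorem statement_11 (k₁ k₂ k₃ : ℕ) (h1 : 1 ≤ k₁) (h2 : 1 ≤ k₂) (h3 : 1 ≤ k₃)
    (fL : Hecke k₁ →ₐ[R] Hecke (k₁ + k₂)) (hfL : IsPsiL (k₁ + k₂) k₁ (by omega) fL)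
    (fR : Hecke k₂ →ₐ[R] Hecke (k₁ + k₂)) (hfR : IsPsiR (k₁ + k₂) k₁ k₂ (by omega) fR)
    (gL : Hecke k₂ →ₐ[R] Hecke (k₂ + k₃)) (hgL : IsPsiL (k₂ + k₃) k₂ (by omega) gL)
    (gR : Hecke k₃ →ₐ[R] Hecke (k₂ + k₃)) (hgR : IsPsiR (k₂ + k₃) k₂ k₃ (by omega) gR)
    (ΦL : Hecke (k₁ + k₂) →ₐ[R] Hecke (k₁ + k₂ + k₃))
    (hΦL : IsPsiL (k₁ + k₂ + k₃) (k₁ + k₂) (by omega) ΦL)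
    (ΦR : Hecke k₃ →ₐ[R] Hecke (k₁ + k₂ + k₃))
    (hΦR : IsPsiR (k₁ + k₂ + k₃) (k₁ + k₂) k₃ (by omega) ΦR)
    (ΓL : Hecke k₁ →ₐ[R] Hecke (k₁ + k₂ + k₃))
    (hΓL : IsPsiL (k₁ + k₂ + k₃) k₁ (by omega) ΓL)
    (ΓR : Hecke (k₂ + k₃) →ₐ[R] Hecke (k₁ + k₂ + k₃))
    (hΓR : IsPsiR (k₁ + k₂ + k₃) k₁ (k₂ + k₃) (by omega) ΓR) :
    ∀ (a : Hecke k₁) (b : Hecke k₂) (c : Hecke k₃),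
      ΦL (fL a * fR b) * ΦR c = ΓL a * ΓR (gL b * gR c) := by
  intro a b c
  calc ΦL (fL a * fR b) * ΦR c
      = (ΦL.comp fL) a * ((ΦL.comp fR) b * ΦR c) := by
        rw [map_mul, AlgHom.comp_apply, AlgHom.comp_apply, mul_assoc]
    _ = ΓL a * ((ΓR.comp gL) b * (ΓR.comp gR) c) := by
        rw [psiL_comp_psiL h1 hfL hΦL hΓL, psiL_comp_psiR_eq_psiR_comp_psiL h2 hfR hgL hΦL hΓR,
          psiR_comp_psiR h3 hgR hΓR hΦR]
    _ = ΓL a * ΓR (gL b * gR c) := by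
        rw [AlgHom.comp_apply, AlgHom.comp_apply, ← map_mul]

end ParabolicInduction
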